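/- Let a(n) be the coefficients of the q-expansion of the eta quotient η(4z)^2 η(16z)^2 / η(8z)^2 = ∑_{n≥1} a(n) q^n. Then for every nonnegative integer n, pod_3(n) ≡ a(4n+1) (mod 3). -/

import Mathlib

/-- `pod ℓ n` is the number of `ℓ`-regular partitions of `n` (no part divisible by `ℓ`)
with distinct odd parts (even parts unrestricted). -/
noncomputable def pod (ℓ n : ℕ) : ℕ :=
  Nat.card {P : n.Partition // (∀ i ∈ P.parts, ¬ ℓ ∣ i) ∧ ∀ i, Odd i → P.parts.count i ≤ 1}

open PowerSeries Finset

set_option maxHeartbeats 1000000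

namespace PodAux

variable {R : Type*} [CommRing R]

/-- Congruence of power series modulo `X^k`. -/
def MD (k : ℕ) (f g : PowerSeries R) : Prop := (X : PowerSeries R) ^ k ∣ f - g

theorem MD.refl {k : ℕ} (f : PowerSeries R) : MD k f f := by simp [MD]

theorem MD.symm {k : ℕ} {f g : PowerSeries R} (h : MD k f g) : MD k g f := by
  have := h.neg_right
  rw [neg_sub] at this
  exact this

theorem MD.trans {k : ℕ} {f g h : PowerSeries R} (h1 : MD k f g) (h2 : MD k g h) :
    MD k f h := by
  have := dvd_add h1 h2
  simpa [MD, sub_add_sub_cancel] using this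

theorem MD.mul {k : ℕ} {f₁ g₁ f₂ g₂ : PowerSeries R} (h1 : MD k f₁ g₁) (h2 : MD k f₂ g₂) :
    MD k (f₁ * f₂) (g₁ * g₂) := by
  have : f₁ * f₂ - g₁ * g₂ = f₁ * (f₂ - g₂) + (f₁ - g₁) * g₂ := by ring
  rw [MD, this]
  exact dvd_add (Dvd.dvd.mul_left h2 f₁) (Dvd.dvd.mul_right h1 g₂)

theorem MD.pow {k : ℕ} {f g : PowerSeries R} (h : MD k f g) (m : ℕ) :
    MD k (f ^ m) (g ^ m) := by
  induction m with
  | zero => simpa using MD.refl 1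
  | succ m ih => rw [pow_succ, pow_succ]; exact ih.mul h

theorem MD.prod {k : ℕ} {ι : Type*} (s : Finset ι) (F G : ι → PowerSeries R)
    (h : ∀ i ∈ s, MD k (F i) (G i)) : MD k (∏ i ∈ s, F i) (∏ i ∈ s, G i) := by
  classical
  induction s using Finset.induction_on with
  | empty => simpa using MD.refl 1
  | @insert a s' hx ih =>
    rw [Finset.prod_insert hx, Finset.prod_insert hx]
    exact (h a (mem_insert_self a s')).mul (ih fun i hi => h i (mem_insert_of_mem hi))

theorem MD.coeff {k : ℕ} {f g : PowerSeries R} (h : MD k f g) {j : ℕ} (hj : j < k) :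
    PowerSeries.coeff (R := R) j f = PowerSeries.coeff (R := R) j g := by
  have := PowerSeries.X_pow_dvd_iff.mp h j hj
  rw [map_sub] at this
  exact sub_eq_zero.mp this

theorem MD.of_coeff {k : ℕ} {f g : PowerSeries R}
    (h : ∀ j < k, PowerSeries.coeff (R := R) j f = PowerSeries.coeff (R := R) j g) : MD k f g := by
  rw [MD, PowerSeries.X_pow_dvd_iff]
  intro m hm
  rw [map_sub, h m hm, sub_self]

theorem MD.cancel {k : ℕ} {f g h : PowerSeries R} (hu : IsUnit h)
    (he : MD k (f * h) (g * h)) : MD k f g := by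
  rcases hu with ⟨u, rfl⟩
  have h2 : (f * ↑u - g * ↑u) * (↑u⁻¹ : PowerSeries R) = f - g := by
    rw [sub_mul, mul_assoc, mul_assoc, Units.mul_inv, mul_one, mul_one]
  rw [MD, ← h2]
  exact Dvd.dvd.mul_right he _

theorem MD.one_of_le {k e : ℕ} (hke : k ≤ e) : MD k (1 - (X : PowerSeries R) ^ e) 1 := by
  rw [MD]
  have : (1 - (X : PowerSeries R) ^ e) - 1 = -(X ^ e) := by ring
  rw [this]
  exact (pow_dvd_pow _ hke).neg_right

/-- `Q E` is the product of `1 - X^e` over the finset `E` of exponents. -/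
noncomputable def Q (E : Finset ℕ) : PowerSeries R := ∏ e ∈ E, (1 - X ^ e)

theorem Q_isUnit {E : Finset ℕ} (h0 : 0 ∉ E) : IsUnit (Q E : PowerSeries R) := by
  rw [PowerSeries.isUnit_iff_constantCoeff, Q, map_prod]
  have : ∀ e ∈ E, constantCoeff (R := R) (1 - X ^ e) = 1 := by
    intro e he
    have he' : e ≠ 0 := fun h => h0 (h ▸ he)
    rw [map_sub, map_one, map_pow, constantCoeff_X, zero_pow he', sub_zero]
  rw [Finset.prod_congr rfl this, Finset.prod_const_one]
  exact isUnit_one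

theorem Q_union {E₁ E₂ : Finset ℕ} (h : Disjoint E₁ E₂) :
    (Q (E₁ ∪ E₂) : PowerSeries R) = Q E₁ * Q E₂ := Finset.prod_union h

/-- Two exponent products agree mod `X^(n+1)` if the exponent sets agree up to `n`. -/
theorem Q_cong {n : ℕ} {E₁ E₂ : Finset ℕ} (h : ∀ e ≤ n, (e ∈ E₁ ↔ e ∈ E₂)) :
    MD (n + 1) (Q E₁ : PowerSeries R) (Q E₂) := by
  classical
  have key : ∀ E : Finset ℕ, MD (n+1) (Q E : PowerSeries R) (Q (E.filter (· ≤ n))) := by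
    intro E
    rw [Q, ← Finset.prod_filter_mul_prod_filter_not E (· ≤ n)]
    have h2 : MD (n+1) (∏ e ∈ E.filter (fun e => ¬ e ≤ n), (1 - (X : PowerSeries R) ^ e)) 1 := by
      have := MD.prod (R := R) (E.filter (fun e => ¬ e ≤ n)) (fun e => 1 - X ^ e) (fun _ => 1)
        (fun e he => by
          have : n + 1 ≤ e := by
            simp only [Finset.mem_filter, not_le] at he
            omega
          exact MD.one_of_le this)
      simpa using this
    have := (MD.refl (R := R) (Q (E.filter (· ≤ n)))).mul h2
    simpa [Q] using this
  have hEq : E₁.filter (· ≤ n) = E₂.filter (· ≤ n) := by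
    ext e
    simp only [Finset.mem_filter]
    constructor
    · rintro ⟨h1, h2⟩; exact ⟨(h e h2).mp h1, h2⟩
    · rintro ⟨h1, h2⟩; exact ⟨(h e h2).mpr h1, h2⟩
  exact (key E₁).trans (hEq ▸ (key E₂).symm)

theorem Q_image {E : Finset ℕ} {w : ℕ → ℕ} (hw : ∀ a ∈ E, ∀ b ∈ E, w a = w b → a = b) :
    (Q (E.image w) : PowerSeries R) = ∏ e ∈ E, (1 - X ^ (w e)) := by
  rw [Q, Finset.prod_image hw]


theorem frob (e : ℕ) : (1 - (X : PowerSeries (ZMod 3)) ^ e) ^ 3 = 1 - X ^ (3 * e) := by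
  haveI : Fact (Nat.Prime 3) := ⟨by norm_num⟩
  haveI : CharP (PowerSeries (ZMod 3)) 3 :=
    charP_of_injective_ringHom (f := (PowerSeries.C (R := ZMod 3))) PowerSeries.C_injective 3
  have h := sub_pow_char (R := PowerSeries (ZMod 3)) (p := 3) 1 (X ^ e)
  rw [one_pow, ← pow_mul, mul_comm e 3] at h
  exact h

theorem Q_frob (E : Finset ℕ) :
    (Q (E.image (fun e => 3 * e)) : PowerSeries (ZMod 3)) = (Q E) ^ 3 := by
  rw [Q, Finset.prod_image (fun a _ b _ h => by omega), Q, ← Finset.prod_pow]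
  exact Finset.prod_congr rfl fun e _ => (frob e).symm

/-- The stretch operator: substitutes `X ↦ X^4`. -/
noncomputable def st (f : PowerSeries R) : PowerSeries R :=
  PowerSeries.mk fun m => if 4 ∣ m then PowerSeries.coeff (R := R) (m / 4) f else 0

theorem coeff_st (f : PowerSeries R) (m : ℕ) :
    PowerSeries.coeff (R := R) m (st f) = if 4 ∣ m then PowerSeries.coeff (R := R) (m / 4) f else 0 :=
  coeff_mk _ _

theorem coeff_st_not_dvd {f : PowerSeries R} {m : ℕ} (h : ¬ 4 ∣ m) :
    PowerSeries.coeff (R := R) m (st f) = 0 := by rw [coeff_st, if_neg h]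

theorem coeff_st_mul4 (f : PowerSeries R) (k : ℕ) :
    PowerSeries.coeff (R := R) (4 * k) (st f) = PowerSeries.coeff (R := R) k f := by
  rw [coeff_st, if_pos ⟨k, rfl⟩, Nat.mul_div_cancel_left _ (by norm_num)]

theorem st_one : st (1 : PowerSeries R) = 1 := by
  ext m
  by_cases h4 : 4 ∣ m
  · obtain ⟨k, rfl⟩ := h4
    rw [coeff_st_mul4, PowerSeries.coeff_one, PowerSeries.coeff_one]
    rcases Nat.eq_zero_or_pos k with rfl | hk
    · simp
    · rw [if_neg (by omega), if_neg (by omega)]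
  · rw [coeff_st_not_dvd h4, PowerSeries.coeff_one, if_neg (by rintro rfl; exact h4 ⟨0, rfl⟩)]

theorem st_add (f g : PowerSeries R) : st (f + g) = st f + st g := by
  ext m
  rw [map_add, coeff_st, coeff_st, coeff_st, map_add]
  split_ifs <;> simp

theorem st_sub (f g : PowerSeries R) : st (f - g) = st f - st g := by
  ext m
  rw [map_sub, coeff_st, coeff_st, coeff_st, map_sub]
  split_ifs <;> simp

theorem st_X_pow (e : ℕ) : st ((X : PowerSeries R) ^ e) = X ^ (4 * e) := by
  ext m
  by_cases h4 : 4 ∣ m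
  · obtain ⟨k, rfl⟩ := h4
    rw [coeff_st_mul4, PowerSeries.coeff_X_pow, PowerSeries.coeff_X_pow]
    by_cases hk : k = e
    · rw [if_pos hk, if_pos (by omega)]
    · rw [if_neg hk, if_neg (by omega)]
  · rw [coeff_st_not_dvd h4, PowerSeries.coeff_X_pow, if_neg (by rintro rfl; exact h4 ⟨e, rfl⟩)]

theorem st_mul (f g : PowerSeries R) : st (f * g) = st f * st g := by
  ext m
  by_cases h4 : 4 ∣ m
  · obtain ⟨k, rfl⟩ := h4
    rw [coeff_st_mul4, PowerSeries.coeff_mul, PowerSeries.coeff_mul]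
    have himg : ∀ p ∈ Finset.HasAntidiagonal.antidiagonal (4 * k), p ∉
        (Finset.HasAntidiagonal.antidiagonal k).image (fun q => (4 * q.1, 4 * q.2)) →
        PowerSeries.coeff (R := R) p.1 (st f) * PowerSeries.coeff (R := R) p.2 (st g) = 0 := by
      rintro ⟨i, j⟩ hp hni
      simp only [Finset.HasAntidiagonal.mem_antidiagonal] at hp
      by_cases hi : 4 ∣ i
      · by_cases hj : 4 ∣ j
        · exfalso
          apply hni
          obtain ⟨i', rfl⟩ := hi
          obtain ⟨j', rfl⟩ := hj
          simp only [Finset.mem_image, Finset.HasAntidiagonal.mem_antidiagonal]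
          exact ⟨(i', j'), by omega, rfl⟩
        · rw [coeff_st_not_dvd hj, mul_zero]
      · rw [coeff_st_not_dvd hi, zero_mul]
    rw [← Finset.sum_subset (s₁ := (Finset.HasAntidiagonal.antidiagonal k).image fun q => (4 * q.1, 4 * q.2))
        (by
          intro p hp
          simp only [Finset.mem_image, Finset.HasAntidiagonal.mem_antidiagonal] at hp
          rcases hp with ⟨⟨i, j⟩, hij, rfl⟩
          simp only [Finset.HasAntidiagonal.mem_antidiagonal]
          omega)
        himg]
    rw [Finset.sum_image (by rintro ⟨a, b⟩ _ ⟨c, d⟩ _ h; simp only [Prod.mk.injEq] at h ⊢; omega)]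
    apply Finset.sum_congr rfl
    rintro ⟨i, j⟩ _
    rw [coeff_st_mul4, coeff_st_mul4]
  · rw [coeff_st_not_dvd h4, PowerSeries.coeff_mul]
    symm
    apply Finset.sum_eq_zero
    rintro ⟨i, j⟩ hp
    simp only [Finset.HasAntidiagonal.mem_antidiagonal] at hp
    by_cases hi : 4 ∣ i
    · have hj : ¬ 4 ∣ j := by
        rintro ⟨c, rfl⟩; rcases hi with ⟨d, rfl⟩; exact h4 (by omega)
      rw [coeff_st_not_dvd hj, mul_zero]
    · rw [coeff_st_not_dvd hi, zero_mul]

theorem st_prod {ι : Type*} (s : Finset ι) (F : ι → PowerSeries R) :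
    st (∏ i ∈ s, F i) = ∏ i ∈ s, st (F i) := by
  classical
  induction s using Finset.induction_on with
  | empty => simpa using st_one
  | @insert a s' hx ih => rw [Finset.prod_insert hx, Finset.prod_insert hx, st_mul, ih]

theorem st_pow (f : PowerSeries R) (m : ℕ) : st (f ^ m) = st f ^ m := by
  induction m with
  | zero => simpa using st_one
  | succ m ih => rw [pow_succ, pow_succ, st_mul, ih]

theorem st_one_sub_X_pow (e : ℕ) : st ((1 : PowerSeries R) - X ^ e) = 1 - X ^ (4 * e) := by
  rw [st_sub, st_one, st_X_pow]

theorem st_one_add_X_pow (e : ℕ) : st ((1 : PowerSeries R) + X ^ e) = 1 + X ^ (4 * e) := by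
  rw [st_add, st_one, st_X_pow]

theorem st_Q (E : Finset ℕ) : st (Q E : PowerSeries R) = Q (E.image (fun e => 4 * e)) := by
  rw [Q, st_prod, Q, Finset.prod_image (fun a _ b _ h => by omega)]
  exact Finset.prod_congr rfl fun e _ => st_one_sub_X_pow e

theorem st_dvd {k : ℕ} {f : PowerSeries R} (h : (X : PowerSeries R) ^ k ∣ f) :
    (X : PowerSeries R) ^ (4 * k) ∣ st f := by
  rw [PowerSeries.X_pow_dvd_iff] at h ⊢
  intro m hm
  rw [coeff_st]
  by_cases h4 : 4 ∣ m
  · rw [if_pos h4]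
    exact h _ (by omega)
  · rw [if_neg h4]

theorem MD.st {k : ℕ} {f g : PowerSeries R} (h : MD k f g) : MD (4 * k) (st f) (st g) := by
  rw [MD] at h ⊢
  rw [← st_sub]
  exact st_dvd h


section Partition
open scoped Classical
open Finset.HasAntidiagonal
universe u
variable {α : Type*} {ι : Type u}

/-- A convenience constructor for the power series whose coefficients indicate a subset. -/
noncomputable def indicatorSeries (α : Type*) [Semiring α] (s : Set ℕ) : PowerSeries α :=
  PowerSeries.mk fun n => if n ∈ s then 1 else 0

theorem coeff_indicator (s : Set ℕ) [Semiring α] (n : ℕ) :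
    coeff (R := α) n (indicatorSeries _ s) = if n ∈ s then 1 else 0 :=
  coeff_mk _ _

theorem coeff_indicator_pos (s : Set ℕ) [Semiring α] (n : ℕ) (h : n ∈ s) :
    coeff (R := α) n (indicatorSeries _ s) = 1 := by rw [coeff_indicator, if_pos h]

theorem coeff_indicator_neg (s : Set ℕ) [Semiring α] (n : ℕ) (h : n ∉ s) :
    coeff (R := α) n (indicatorSeries _ s) = 0 := by rw [coeff_indicator, if_neg h]

theorem constantCoeff_indicator (s : Set ℕ) [Semiring α] :
    constantCoeff (R := α) (indicatorSeries _ s) = if 0 ∈ s then 1 else 0 :=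
  rfl

theorem two_series (i : ℕ) [Semiring α] :
    1 + (X : PowerSeries α) ^ i.succ = indicatorSeries α {0, i.succ} := by
  ext n
  simp only [coeff_indicator, coeff_one, coeff_X_pow, Set.mem_insert_iff, Set.mem_singleton_iff,
    map_add]
  cases' n with d
  · simp [(Nat.succ_ne_zero i).symm]
  · simp [Nat.succ_ne_zero d]

theorem num_series' [Field α] (i : ℕ) :
    (1 - (X : PowerSeries α) ^ (i + 1))⁻¹ = indicatorSeries α {k | i + 1 ∣ k} := by
  rw [PowerSeries.inv_eq_iff_mul_eq_one]
  · have key : indicatorSeries α {k | i + 1 ∣ k} =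
        1 + X ^ (i + 1) * indicatorSeries α {k | i + 1 ∣ k} := by
      ext m
      rw [map_add, coeff_X_pow_mul', coeff_indicator, coeff_indicator, coeff_one]
      simp only [Set.mem_setOf_eq]
      by_cases hm : i + 1 ≤ m
      · obtain ⟨t, rfl⟩ := Nat.exists_eq_add_of_le hm
        simp only [if_pos hm, Nat.add_sub_cancel_left, Nat.dvd_add_self_left,
          show i + 1 + t ≠ 0 by omega, if_false, zero_add]
      · rw [if_neg hm, add_zero]
        by_cases h0 : m = 0
        · subst h0; simp
        · rw [if_neg h0, if_neg (fun h => h0 (Nat.eq_zero_of_dvd_of_lt h (by omega)))]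
    linear_combination key
  · simp [zero_pow]

noncomputable def mkOdd : ℕ ↪ ℕ :=
  ⟨fun i => 2 * i + 1, fun x y h => by linarith⟩

-- The main workhorse of the partition theorem proof.
theorem partialGF_prop (α : Type*) [CommSemiring α] (n : ℕ) (s : Finset ℕ) (hs : ∀ i ∈ s, 0 < i)
    (c : ℕ → Set ℕ) (hc : ∀ i, i ∉ s → 0 ∈ c i) :
    #{p : n.Partition | (∀ j, p.parts.count j ∈ c j) ∧ ∀ j ∈ p.parts, j ∈ s} =
      coeff (R := α) n (∏ i ∈ s, indicatorSeries α ((· * i) '' c i)) := by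
  simp_rw [coeff_prod, coeff_indicator, prod_boole, sum_boole]
  apply congr_arg
  simp only [mem_univ, forall_true_left, not_and, not_forall, exists_prop,
    Set.mem_image, not_exists]
  set φ : (a : Nat.Partition n) →
    a ∈ filter (fun p ↦ (∀ (j : ℕ), Multiset.count j p.parts ∈ c j) ∧ ∀ j ∈ p.parts, j ∈ s) univ →
    ℕ →₀ ℕ := fun p _ => {
      toFun := fun i => Multiset.count i p.parts • i
      support := Finset.filter (fun i => i ≠ 0) p.parts.toFinset
      mem_support_toFun := fun a => by
        simp only [smul_eq_mul, ne_eq, mul_eq_zero, Multiset.count_eq_zero]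
        rw [not_or, not_not]
        simp only [Multiset.mem_toFinset, not_not, mem_filter] }
  refine Finset.card_bij φ ?_ ?_ ?_
  · intro a ha
    simp only [φ, not_forall, not_exists, not_and, exists_prop, mem_filter]
    rw [mem_finsuppAntidiag]
    dsimp only [ne_eq, smul_eq_mul, id_eq, eq_mpr_eq_cast, le_eq_subset, Finsupp.coe_mk]
    simp only [mem_univ, forall_true_left, not_and, not_forall, exists_prop,
      mem_filter, true_and] at ha
    refine ⟨⟨?_, fun i ↦ ?_⟩, fun i _ ↦ ⟨a.parts.count i, ha.1 i, rfl⟩⟩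
    · conv_rhs => simp [← a.parts_sum]
      rw [sum_multiset_count_of_subset _ s]
      · simp only [smul_eq_mul]
      · intro i
        simp only [Multiset.mem_toFinset, not_not, mem_filter]
        apply ha.2
    · simp only [ne_eq, Multiset.mem_toFinset, not_not, mem_filter, and_imp]
      exact fun hi _ ↦ ha.2 i hi
  · intro p₁ hp₁ p₂ hp₂ h
    apply Nat.Partition.ext
    simp only [true_and, mem_univ, mem_filter] at hp₁ hp₂
    ext i
    simp only [φ, ne_eq, Multiset.mem_toFinset, not_not, smul_eq_mul, Finsupp.mk.injEq] at h
    by_cases hi : i = 0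
    · rw [hi]
      rw [Multiset.count_eq_zero_of_notMem]
      · rw [Multiset.count_eq_zero_of_notMem]
        intro a; exact Nat.lt_irrefl 0 (hs 0 (hp₂.2 0 a))
      intro a; exact Nat.lt_irrefl 0 (hs 0 (hp₁.2 0 a))
    · rw [← mul_left_inj' hi]
      rw [funext_iff] at h
      exact h.2 i
  · simp only [φ, mem_filter, mem_finsuppAntidiag, mem_univ, exists_prop, true_and, and_assoc]
    rintro f ⟨hf, hf₃, hf₄⟩
    have hf' : f ∈ finsuppAntidiag s n := mem_finsuppAntidiag.mpr ⟨hf, hf₃⟩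
    simp only [mem_finsuppAntidiag] at hf'
    refine ⟨⟨∑ i ∈ s, Multiset.replicate (f i / i) i, ?_, ?_⟩, ?_, ?_, ?_⟩
    · intro i hi
      simp only [exists_prop, Multiset.mem_sum, mem_map, Function.Embedding.coeFn_mk] at hi
      rcases hi with ⟨t, ht, z⟩
      apply hs
      rwa [Multiset.eq_of_mem_replicate z]
    · simp_rw [Multiset.sum_sum, Multiset.sum_replicate, Nat.nsmul_eq_mul]
      rw [← hf'.1]
      refine sum_congr rfl fun i hi => Nat.div_mul_cancel ?_
      rcases hf₄ i hi with ⟨w, _, hw₂⟩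
      rw [← hw₂]
      exact dvd_mul_left _ _
    · intro i
      simp_rw [Multiset.count_sum', Multiset.count_replicate, sum_ite_eq']
      split_ifs with h
      · rcases hf₄ i h with ⟨w, hw₁, hw₂⟩
        rwa [← hw₂, Nat.mul_div_cancel _ (hs i h)]
      · exact hc _ h
    · intro i hi
      rw [Multiset.mem_sum] at hi
      rcases hi with ⟨j, hj₁, hj₂⟩
      rwa [Multiset.eq_of_mem_replicate hj₂]
    · ext i
      simp_rw [Multiset.count_sum', Multiset.count_replicate, sum_ite_eq']
      simp only [ne_eq, Multiset.mem_toFinset, not_not, smul_eq_mul, ite_mul,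
        zero_mul, Finsupp.coe_mk]
      split_ifs with h
      · apply Nat.div_mul_cancel
        rcases hf₄ i h with ⟨w, _, hw₂⟩
        apply Dvd.intro_left _ hw₂
      · apply symm
        rw [← Finsupp.notMem_support_iff]
        exact notMem_mono hf'.2 h



end Partition

section PodBridge
open scoped Classical

theorem MD.of_eq {R : Type*} [CommRing R] {k : ℕ} {f g : PowerSeries R} (h : f = g) :
    MD k f g := h ▸ MD.refl f

def sset (n : ℕ) : Finset ℕ := (Finset.Icc 1 (n+1)).filter (fun i => ¬ (3 ∣ i))
def Os (n : ℕ) : Finset ℕ := (sset n).filter (fun i => ¬ (2 ∣ i))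
def Es (n : ℕ) : Finset ℕ := (sset n).filter (fun i => 2 ∣ i)

def cset (i : ℕ) : Set ℕ := if 2 ∣ i then Set.univ else {0, 1}

theorem pod_coeff (n k : ℕ) (hk : k ≤ n) :
    ((pod 3 k : ℕ) : ZMod 3) =
      PowerSeries.coeff (R := (ZMod 3)) k
        (∏ i ∈ sset n, indicatorSeries (ZMod 3) ((· * i) '' cset i)) := by
  have hcard : pod 3 k =
      #{p : k.Partition | (∀ j, p.parts.count j ∈ cset j) ∧ ∀ j ∈ p.parts, j ∈ sset n} := by
    rw [pod, Nat.card_eq_fintype_card, Fintype.card_subtype]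
    apply congrArg Finset.card
    apply Finset.filter_congr
    intro p _
    constructor
    · rintro ⟨h3, hodd⟩
      refine ⟨fun j => ?_, fun j hj => ?_⟩
      · unfold cset
        split_ifs with h2
        · trivial
        · have hoj : Odd j := Nat.odd_iff.mpr (by omega)
          have hc := hodd j hoj
          simp only [Set.mem_insert_iff, Set.mem_singleton_iff]
          omega
      · have h1 : 1 ≤ j := p.parts_pos hj
        have h2 : j ≤ k := by
          simpa [p.parts_sum] using Multiset.single_le_sum (fun _ _ => Nat.zero_le _) _ hj
        simp only [sset, Finset.mem_filter, Finset.mem_Icc]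
        exact ⟨⟨h1, by omega⟩, h3 j hj⟩
    · rintro ⟨hc, hs'⟩
      refine ⟨fun i hi => ?_, fun i hoi => ?_⟩
      · have := hs' i hi
        simp only [sset, Finset.mem_filter, Finset.mem_Icc] at this
        exact this.2
      · have hci := hc i
        unfold cset at hci
        rw [if_neg (by rw [Nat.odd_iff] at hoi; omega)] at hci
        simp only [Set.mem_insert_iff, Set.mem_singleton_iff] at hci
        omega
  rw [hcard]
  exact partialGF_prop (ZMod 3) k (sset n)
    (fun i hi => by
      simp only [sset, Finset.mem_filter, Finset.mem_Icc] at hi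
      omega)
    cset
    (fun i _ => by
      unfold cset
      split_ifs
      · trivial
      · exact Or.inl rfl)

theorem prod_sset_eq (n : ℕ) :
    (∏ i ∈ sset n, indicatorSeries (ZMod 3) ((· * i) '' cset i)) =
      (∏ i ∈ Es n, indicatorSeries (ZMod 3) {e | i ∣ e}) *
        ∏ i ∈ Os n, (1 + (X : PowerSeries (ZMod 3)) ^ i) := by
  rw [← Finset.prod_filter_mul_prod_filter_not (sset n) (fun i => 2 ∣ i)]
  congr 1
  · apply Finset.prod_congr rfl
    intro i hi
    have h2 : 2 ∣ i := (Finset.mem_filter.mp hi).2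
    have himg : ((· * i) '' (cset i)) = {e | i ∣ e} := by
      unfold cset
      rw [if_pos h2]
      ext e
      constructor
      · rintro ⟨x, -, rfl⟩
        exact Dvd.intro_left x rfl
      · rintro ⟨c, rfl⟩
        exact ⟨c, trivial, mul_comm c i⟩
    rw [himg]
  · apply Finset.prod_congr rfl
    intro i hi
    have h1 : 1 ≤ i := by
      have := (Finset.mem_filter.mp hi).1
      simp only [sset, Finset.mem_filter, Finset.mem_Icc] at this
      omega
    have h2 : ¬ (2 ∣ i) := (Finset.mem_filter.mp hi).2
    obtain ⟨i', rfl⟩ : ∃ i', i = i' + 1 := ⟨i - 1, by omega⟩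
    have himg : ((· * (i' + 1)) '' cset (i' + 1)) = {0, i' + 1} := by
      unfold cset
      rw [if_neg h2, Set.image_pair]
      simp
    rw [himg]
    exact (two_series i').symm

theorem es_cancel (n : ℕ) :
    (∏ i ∈ Es n, indicatorSeries (ZMod 3) {e | i ∣ e}) * Q (Es n) = 1 := by
  rw [Q, ← Finset.prod_mul_distrib]
  apply Finset.prod_eq_one
  intro i hi
  have h1 : 1 ≤ i := by
    have := (Finset.mem_filter.mp hi).1
    simp only [sset, Finset.mem_filter, Finset.mem_Icc] at this
    omega
  obtain ⟨i', rfl⟩ : ∃ i', i = i' + 1 := ⟨i - 1, by omega⟩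
  rw [← num_series']
  apply PowerSeries.inv_mul_cancel
  rw [map_sub, map_one, map_pow, PowerSeries.constantCoeff_X, zero_pow (by omega), sub_zero]
  exact one_ne_zero

theorem stepB (n : ℕ) :
    MD (n+1) (PowerSeries.mk (fun j => ((pod 3 j : ℕ) : ZMod 3)) * Q (Es n))
      (∏ i ∈ Os n, (1 + (X : PowerSeries (ZMod 3)) ^ i)) := by
  have h1 : MD (n+1) (PowerSeries.mk (fun j => ((pod 3 j : ℕ) : ZMod 3)))
      (∏ i ∈ sset n, indicatorSeries (ZMod 3) ((· * i) '' cset i)) :=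
    MD.of_coeff fun j hj => by
      rw [PowerSeries.coeff_mk]
      exact pod_coeff n j (by omega)
  have h2 := h1.mul (MD.refl (Q (Es n)))
  rw [prod_sset_eq] at h2
  refine h2.trans (MD.of_eq ?_)
  rw [mul_comm (∏ i ∈ Es n, indicatorSeries (ZMod 3) {e | i ∣ e}), mul_assoc, es_cancel, mul_one]

end PodBridge
section Heart
open scoped Classical

theorem MD.weaken {R : Type*} [CommRing R] {k k' : ℕ} {f g : PowerSeries R}
    (h : MD k f g) (hk : k' ≤ k) : MD k' f g :=
  dvd_trans (pow_dvd_pow _ hk) h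

theorem MD.prod_subset {R : Type*} [CommRing R] {k : ℕ} {s t : Finset ℕ}
    (hst : s ⊆ t) {F : ℕ → PowerSeries R} (h : ∀ i ∈ t, i ∉ s → MD k (F i) 1) :
    MD k (∏ i ∈ t, F i) (∏ i ∈ s, F i) := by
  rw [← Finset.prod_sdiff hst]
  have h1 : MD k (∏ i ∈ t \ s, F i) 1 := by
    have := MD.prod (t \ s) F (fun _ => 1) (fun i hi => by
      rw [Finset.mem_sdiff] at hi
      exact h i hi.1 hi.2)
    simpa using this
  exact (h1.mul (MD.refl (∏ i ∈ s, F i))).trans (MD.of_eq (one_mul _))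

variable {n N : ℕ}

/-- `Ek k N` : exponents `k*(m+1)` for `m < N`. -/
def Ek (k N : ℕ) : Finset ℕ := (Finset.range N).image (fun m => k * (m + 1))

theorem mem_Ek {k N e : ℕ} (hk : 1 ≤ k) :
    e ∈ Ek k N ↔ k ∣ e ∧ 1 ≤ e ∧ e ≤ k * N := by
  simp only [Ek, Finset.mem_image, Finset.mem_range]
  constructor
  · rintro ⟨m, hm, rfl⟩
    exact ⟨⟨m + 1, rfl⟩, Nat.one_le_iff_ne_zero.mpr (by positivity),
      Nat.mul_le_mul_left k (by omega)⟩
  · rintro ⟨⟨c, rfl⟩, h1, h2⟩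
    have hc1 : 1 ≤ c := by
      rcases Nat.eq_zero_or_pos c with rfl | h
      · omega
      · exact h
    have hcN : c ≤ N := Nat.le_of_mul_le_mul_left h2 (by omega)
    exact ⟨c - 1, by omega, by rw [Nat.sub_add_cancel hc1]⟩

theorem Q_Ek_unit {k N : ℕ} (hk : 1 ≤ k) : IsUnit (Q (Ek k N) : PowerSeries (ZMod 3)) :=
  Q_isUnit (fun h => by rw [mem_Ek hk] at h; omega)

theorem mem_sset {e : ℕ} : e ∈ sset n ↔ 1 ≤ e ∧ e ≤ n + 1 ∧ ¬ 3 ∣ e := by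
  simp only [sset, Finset.mem_filter, Finset.mem_Icc]
  tauto

theorem mem_Os {e : ℕ} : e ∈ Os n ↔ 1 ≤ e ∧ e ≤ n + 1 ∧ ¬ 3 ∣ e ∧ ¬ 2 ∣ e := by
  simp only [Os, Finset.mem_filter, mem_sset]
  tauto

theorem mem_Es {e : ℕ} : e ∈ Es n ↔ 1 ≤ e ∧ e ≤ n + 1 ∧ ¬ 3 ∣ e ∧ 2 ∣ e := by
  simp only [Es, Finset.mem_filter, mem_sset]
  tauto

theorem Q_Os_unit : IsUnit (Q (Os n) : PowerSeries (ZMod 3)) :=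
  Q_isUnit (fun h => by rw [mem_Os] at h; omega)

theorem Q_Es_unit : IsUnit (Q (Es n) : PowerSeries (ZMod 3)) :=
  Q_isUnit (fun h => by rw [mem_Es] at h; omega)

def A1 (n : ℕ) : Finset ℕ :=
  ((Finset.Icc 1 (n+1)).filter (fun j => ¬ 2 ∣ j ∧ 3 ∣ j)).image (fun j => 2 * j)
def A2 (n : ℕ) : Finset ℕ :=
  ((Finset.Icc 1 (n+1)).filter (fun j => 2 ∣ j)).image (fun j => 2 * j)
def T3 (n : ℕ) : Finset ℕ := (Finset.Icc 1 (n+1)).filter (fun j => 3 ∣ j)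
def Gs2 (n : ℕ) : Finset ℕ :=
  ((Finset.Icc 1 (n+1)).filter (fun j => ¬ 2 ∣ j)).image (fun j => 2 * j)
def S2 (n : ℕ) : Finset ℕ := (Os n).image (fun j => 2 * j)
def H2 (n : ℕ) : Finset ℕ := (Finset.Icc 1 (n+1)).image (fun j => 2 * j)

theorem mem_A1 {e : ℕ} : e ∈ A1 n ↔ ∃ j, (1 ≤ j ∧ j ≤ n + 1 ∧ ¬ 2 ∣ j ∧ 3 ∣ j) ∧ 2 * j = e := by
  simp only [A1, Finset.mem_image, Finset.mem_filter, Finset.mem_Icc]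
  constructor <;> rintro ⟨j, hj, he⟩ <;> exact ⟨j, by tauto, he⟩

theorem mem_A2 {e : ℕ} : e ∈ A2 n ↔ 4 ∣ e ∧ 4 ≤ e ∧ e ≤ 2 * (n + 1) := by
  simp only [A2, Finset.mem_image, Finset.mem_filter, Finset.mem_Icc]
  constructor
  · rintro ⟨j, ⟨⟨h1, h2⟩, c, rfl⟩, rfl⟩
    exact ⟨⟨c, by omega⟩, by omega, by omega⟩
  · rintro ⟨⟨c, rfl⟩, h1, h2⟩
    exact ⟨2 * c, ⟨⟨by omega, by omega⟩, ⟨c, rfl⟩⟩, by omega⟩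

theorem mem_T3 {e : ℕ} : e ∈ T3 n ↔ 1 ≤ e ∧ e ≤ n + 1 ∧ 3 ∣ e := by
  simp only [T3, Finset.mem_filter, Finset.mem_Icc]
  tauto

theorem mem_Gs2 {e : ℕ} : e ∈ Gs2 n ↔ ∃ j, (1 ≤ j ∧ j ≤ n + 1 ∧ ¬ 2 ∣ j) ∧ 2 * j = e := by
  simp only [Gs2, Finset.mem_image, Finset.mem_filter, Finset.mem_Icc]
  constructor <;> rintro ⟨j, hj, he⟩ <;> exact ⟨j, by tauto, he⟩

theorem mem_S2 {e : ℕ} : e ∈ S2 n ↔ ∃ j, (1 ≤ j ∧ j ≤ n + 1 ∧ ¬ 3 ∣ j ∧ ¬ 2 ∣ j) ∧ 2 * j = e := by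
  simp only [S2, Finset.mem_image, mem_Os]

theorem mem_H2 {e : ℕ} : e ∈ H2 n ↔ 2 ∣ e ∧ 2 ≤ e ∧ e ≤ 2 * (n + 1) := by
  simp only [H2, Finset.mem_image, Finset.mem_Icc]
  constructor
  · rintro ⟨j, ⟨h1, h2⟩, rfl⟩
    exact ⟨⟨j, rfl⟩, by omega, by omega⟩
  · rintro ⟨⟨c, rfl⟩, h1, h2⟩
    exact ⟨c, ⟨by omega, by omega⟩, rfl⟩

theorem Q_A1_unit : IsUnit (Q (A1 n) : PowerSeries (ZMod 3)) :=
  Q_isUnit (fun h => by rw [mem_A1] at h; obtain ⟨j, hj, he⟩ := h; omega)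

theorem Q_A2_unit : IsUnit (Q (A2 n) : PowerSeries (ZMod 3)) :=
  Q_isUnit (fun h => by rw [mem_A2] at h; omega)

theorem Q_T3_unit : IsUnit (Q (T3 n) : PowerSeries (ZMod 3)) :=
  Q_isUnit (fun h => by rw [mem_T3] at h; omega)

theorem pair_eq : (Q (Os n) : PowerSeries (ZMod 3)) * (∏ i ∈ Os n, (1 + X ^ i)) = Q (S2 n) := by
  rw [Q, ← Finset.prod_mul_distrib, S2, Q, Finset.prod_image (fun a _ b _ h => by omega)]
  apply Finset.prod_congr rfl
  intro i _
  rw [mul_comm 2 i, pow_mul]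
  ring

theorem union_OA1A2 :
    (Q (S2 n) : PowerSeries (ZMod 3)) * Q (A1 n) * Q (A2 n) = Q (H2 n) := by
  have d1 : Disjoint (S2 n) (A1 n) := by
    rw [Finset.disjoint_left]
    intro e he he'
    rw [mem_S2] at he
    rw [mem_A1] at he'
    obtain ⟨j, hj, rfl⟩ := he
    obtain ⟨j', hj', hee⟩ := he'
    omega
  have d2 : Disjoint (S2 n ∪ A1 n) (A2 n) := by
    rw [Finset.disjoint_left]
    intro e he he'
    rw [Finset.mem_union, mem_S2, mem_A1] at he
    rw [mem_A2] at he'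
    rcases he with ⟨j, hj, rfl⟩ | ⟨j, hj, rfl⟩ <;> omega
  have hset : (S2 n ∪ A1 n) ∪ A2 n = H2 n := by
    ext e
    rw [Finset.mem_union, Finset.mem_union, mem_S2, mem_A1, mem_A2, mem_H2]
    constructor
    · rintro ((⟨j, hj, rfl⟩ | ⟨j, hj, rfl⟩) | ⟨⟨c, rfl⟩, h1, h2⟩)
      · exact ⟨⟨j, rfl⟩, by omega, by omega⟩
      · exact ⟨⟨j, rfl⟩, by omega, by omega⟩
      · exact ⟨⟨2 * c, by omega⟩, by omega, by omega⟩
    · rintro ⟨⟨c, rfl⟩, h1, h2⟩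
      by_cases hc2 : 2 ∣ c
      · obtain ⟨d, rfl⟩ := hc2
        exact Or.inr ⟨⟨d, by omega⟩, by omega, by omega⟩
      · by_cases hc3 : 3 ∣ c
        · exact Or.inl (Or.inr ⟨c, ⟨by omega, by omega, hc2, hc3⟩, rfl⟩)
        · exact Or.inl (Or.inl ⟨c, ⟨by omega, by omega, hc3, hc2⟩, rfl⟩)
  rw [← hset, Q_union d2, Q_union d1]

theorem union_Gs2A2 :
    (Q (Gs2 n) : PowerSeries (ZMod 3)) * Q (A2 n) = Q (H2 n) := by
  have d1 : Disjoint (Gs2 n) (A2 n) := by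
    rw [Finset.disjoint_left]
    intro e he he'
    rw [mem_Gs2] at he
    rw [mem_A2] at he'
    obtain ⟨j, hj, rfl⟩ := he
    omega
  have hset : Gs2 n ∪ A2 n = H2 n := by
    ext e
    rw [Finset.mem_union, mem_Gs2, mem_A2, mem_H2]
    constructor
    · rintro (⟨j, hj, rfl⟩ | ⟨⟨c, rfl⟩, h1, h2⟩)
      · exact ⟨⟨j, rfl⟩, by omega, by omega⟩
      · exact ⟨⟨2 * c, by omega⟩, by omega, by omega⟩
    · rintro ⟨⟨c, rfl⟩, h1, h2⟩
      by_cases hc2 : 2 ∣ c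
      · obtain ⟨d, rfl⟩ := hc2
        exact Or.inr ⟨⟨d, by omega⟩, by omega, by omega⟩
      · exact Or.inl ⟨c, ⟨by omega, by omega, hc2⟩, rfl⟩
  rw [← hset, Q_union d1]

theorem union_OEs : (Q (Os n) : PowerSeries (ZMod 3)) * Q (Es n) = Q (sset n) := by
  have d1 : Disjoint (Os n) (Es n) := by
    rw [Finset.disjoint_left]
    intro e he he'
    rw [mem_Os] at he
    rw [mem_Es] at he'
    omega
  have hset : Os n ∪ Es n = sset n := by
    ext e
    rw [Finset.mem_union, mem_Os, mem_Es, mem_sset]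
    rcases Nat.even_or_odd e with ⟨c, rfl⟩ | ⟨c, rfl⟩ <;> constructor <;> intro h <;> omega
  rw [← hset, Q_union d1]

theorem union_ssetT3 :
    (Q (sset n) : PowerSeries (ZMod 3)) * Q (T3 n) = Q (Finset.Icc 1 (n+1)) := by
  have d1 : Disjoint (sset n) (T3 n) := by
    rw [Finset.disjoint_left]
    intro e he he'
    rw [mem_sset] at he
    rw [mem_T3] at he'
    omega
  have hset : sset n ∪ T3 n = Finset.Icc 1 (n+1) := by
    ext e
    rw [Finset.mem_union, mem_sset, mem_T3, Finset.mem_Icc]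
    by_cases h3 : 3 ∣ e <;> constructor <;> intro h <;> omega
  rw [← hset, Q_union d1]

-- Congruence pieces
theorem congH2 (hN : n + 1 ≤ N) :
    MD (n+1) (Q (H2 n) : PowerSeries (ZMod 3)) (Q (Ek 2 N)) :=
  Q_cong (fun e he => by
    rw [mem_H2, mem_Ek (by omega)]
    omega)

theorem congA2 (hN : n + 1 ≤ N) :
    MD (n+1) (Q (A2 n) : PowerSeries (ZMod 3)) (Q (Ek 4 N)) :=
  Q_cong (fun e he => by
    rw [mem_A2, mem_Ek (by omega)]
    omega)

theorem congIcc (hN : n + 1 ≤ N) :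
    MD (n+1) (Q (Finset.Icc 1 (n+1)) : PowerSeries (ZMod 3)) (Q (Ek 1 N)) :=
  Q_cong (fun e he => by
    rw [Finset.mem_Icc, mem_Ek (by omega)]
    omega)

theorem congT3 (hN : n + 1 ≤ N) :
    MD (n+1) (Q (T3 n) : PowerSeries (ZMod 3)) ((Q (Ek 1 N)) ^ 3) := by
  have h1 : MD (n+1) (Q (T3 n) : PowerSeries (ZMod 3))
      (Q ((Ek 1 N).image (fun e => 3 * e))) := by
    apply Q_cong
    intro e he
    rw [mem_T3]
    simp only [Finset.mem_image]
    constructor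
    · rintro ⟨h1, h2, c, rfl⟩
      exact ⟨c, by rw [mem_Ek (by omega)]; omega, by omega⟩
    · rintro ⟨b, hb, rfl⟩
      rw [mem_Ek (by omega)] at hb
      omega
  exact h1.trans (MD.of_eq (Q_frob _))

theorem congA1 (hN : n + 1 ≤ N) :
    MD (n+1) (Q (A1 n) : PowerSeries (ZMod 3)) ((Q (Gs2 n)) ^ 3) := by
  have h1 : MD (n+1) (Q (A1 n) : PowerSeries (ZMod 3))
      (Q ((Gs2 n).image (fun e => 3 * e))) := by
    apply Q_cong
    intro e he
    rw [mem_A1]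
    simp only [Finset.mem_image]
    constructor
    · rintro ⟨j, ⟨h1, h2, h3, c, rfl⟩, rfl⟩
      refine ⟨2 * c, ?_, by omega⟩
      rw [mem_Gs2]
      exact ⟨c, ⟨by omega, by omega, by omega⟩, rfl⟩
    · rintro ⟨b, hb, rfl⟩
      rw [mem_Gs2] at hb
      obtain ⟨j, ⟨h1, h2, h3⟩, rfl⟩ := hb
      exact ⟨3 * j, ⟨by omega, by omega, by omega, by omega⟩, by omega⟩
  exact h1.trans (MD.of_eq (Q_frob _))


theorem Q_Ek_prod {R : Type*} [CommRing R] {k N : ℕ} (hk : 1 ≤ k) :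
    (Q (Ek k N) : PowerSeries R) = ∏ m ∈ Finset.range N, (1 - X ^ (k * (m + 1))) :=
  Q_image (fun a _ b _ h => by
    have := Nat.eq_of_mul_eq_mul_left (show 0 < k by omega) h
    omega)

theorem Q_Ek_sq {R : Type*} [CommRing R] {k N : ℕ} (hk : 1 ≤ k) :
    (Q (Ek k N) : PowerSeries R) ^ 2 = ∏ m ∈ Finset.range N, (1 - X ^ (k * (m + 1))) ^ 2 := by
  rw [Q_Ek_prod hk, Finset.prod_pow]

theorem md_trunc {R : Type*} [CommRing R] {k j N : ℕ} (hk : 1 ≤ k) (hjN : j + 1 ≤ N) :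
    MD (j + 1) (∏ m ∈ Finset.range N, (1 - (X : PowerSeries R) ^ (k * (m + 1))) ^ 2)
      (∏ m ∈ Finset.range (j + 1), (1 - (X : PowerSeries R) ^ (k * (m + 1))) ^ 2) := by
  apply MD.prod_subset (by simp only [Finset.range_subset_range]; omega)
  intro i hi hni
  simp only [Finset.mem_range] at hi hni
  have h1 : MD (j + 1) ((1 - (X : PowerSeries R) ^ (k * (i + 1)))) 1 := by
    apply MD.one_of_le
    have : i + 1 ≤ k * (i + 1) := Nat.le_mul_of_pos_left _ (by omega)
    omega
  exact (h1.pow 2).trans (MD.of_eq (one_pow 2))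

attribute [irreducible] Q

theorem base_cong (hN : n + 1 ≤ N) :
    MD (n+1) ((Q (Gs2 n) : PowerSeries (ZMod 3)) * Q (Ek 4 N)) (Q (Ek 2 N)) :=
  (((MD.refl _).mul (congA2 hN).symm).trans (MD.of_eq union_Gs2A2)).trans (congH2 hN)

/-- The heart: the mod-3 eta-product identity. -/
theorem stepD (hN : n + 1 ≤ N) :
    MD (n+1) ((∏ i ∈ Os n, (1 + (X : PowerSeries (ZMod 3)) ^ i)) * Q (Ek 2 N) ^ 2)
      (Q (Es n) * Q (Ek 1 N) ^ 2 * Q (Ek 4 N) ^ 2) := by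
  set P1 := ∏ i ∈ Os n, (1 + (X : PowerSeries (ZMod 3)) ^ i) with hP1
  set U := (Q (Os n) : PowerSeries (ZMod 3)) * Q (A1 n) * Q (A2 n) * Q (T3 n) with hU
  have hUunit : IsUnit U :=
    ((Q_Os_unit.mul Q_A1_unit).mul Q_A2_unit).mul Q_T3_unit
  apply MD.cancel hUunit
  have eqL : (P1 * Q (Ek 2 N) ^ 2) * U
      = Q (H2 n) * Q (T3 n) * Q (Ek 2 N) ^ 2 := by
    have h1 := pair_eq (n := n)
    have h2 := union_OA1A2 (n := n)
    rw [hU]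
    linear_combination (Q (A1 n) * Q (A2 n) * Q (T3 n) * Q (Ek 2 N) ^ 2) * h1 +
      (Q (T3 n) * Q (Ek 2 N) ^ 2) * h2
  have eqR : (Q (Es n) * Q (Ek 1 N) ^ 2 * Q (Ek 4 N) ^ 2) * U
      = Q (Finset.Icc 1 (n+1)) * Q (A1 n) * Q (A2 n) * Q (Ek 1 N) ^ 2 * Q (Ek 4 N) ^ 2 := by
    have h1 := union_OEs (n := n)
    have h2 := union_ssetT3 (n := n)
    rw [hU]
    linear_combination (Q (A1 n) * Q (A2 n) * Q (T3 n) * Q (Ek 1 N) ^ 2 * Q (Ek 4 N) ^ 2) * h1 +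
      (Q (A1 n) * Q (A2 n) * Q (Ek 1 N) ^ 2 * Q (Ek 4 N) ^ 2) * h2
  rw [eqL, eqR]
  -- LHS ≡ QE2^3 * QE1^3, RHS ≡ QE1^3 * QE4^3 * QGs2^3
  have hL : MD (n+1) (Q (H2 n) * Q (T3 n) * Q (Ek 2 N) ^ 2 : PowerSeries (ZMod 3))
      (Q (Ek 2 N) ^ 3 * Q (Ek 1 N) ^ 3) := by
    have := ((congH2 hN).mul (congT3 hN)).mul (MD.refl (Q (Ek 2 N) ^ 2))
    exact this.trans (MD.of_eq (by ring))
  have hR : MD (n+1)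
      (Q (Finset.Icc 1 (n+1)) * Q (A1 n) * Q (A2 n) * Q (Ek 1 N) ^ 2 * Q (Ek 4 N) ^ 2 :
        PowerSeries (ZMod 3))
      (Q (Ek 1 N) ^ 3 * (Q (Gs2 n) * Q (Ek 4 N)) ^ 3) := by
    have := ((((congIcc hN).mul (congA1 hN)).mul (congA2 hN)).mul
      (MD.refl (Q (Ek 1 N) ^ 2))).mul (MD.refl (Q (Ek 4 N) ^ 2))
    exact this.trans (MD.of_eq (by ring))
  have hMid : MD (n+1) (Q (Ek 2 N) ^ 3 * Q (Ek 1 N) ^ 3 : PowerSeries (ZMod 3))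
      (Q (Ek 1 N) ^ 3 * (Q (Gs2 n) * Q (Ek 4 N)) ^ 3) := by
    have := ((base_cong hN).symm.pow 3).mul (MD.refl (Q (Ek 1 N) ^ 3))
    exact this.trans (MD.of_eq (mul_comm _ _))
  exact (hL.trans hMid).trans hR.symm

end Heart
section Final
open scoped Classical

theorem Ek_image4 (k N : ℕ) : (Ek k N).image (fun e => 4 * e) = Ek (4 * k) N := by
  rw [Ek, Finset.image_image, Ek]
  apply Finset.image_congr
  intro m _
  simp only [Function.comp_apply]
  ring

theorem st_Q_Ek (k N : ℕ) : st (Q (Ek k N) : PowerSeries (ZMod 3)) = Q (Ek (4 * k) N) := by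
  rw [st_Q, Ek_image4]

theorem zero_not_mem_Es4 {n : ℕ} : 0 ∉ (Es n).image (fun e => 4 * e) := by
  simp only [Finset.mem_image]
  rintro ⟨e, he, h0⟩
  rw [mem_Es] at he
  omega

/-- Step A : extraction from the hypothesis `ha`. -/
theorem stepA (a' : ℕ → ZMod 3)
    (ha' : ∀ j : ℕ,
      PowerSeries.coeff (R := (ZMod 3)) j
          (PowerSeries.mk a' *
            ∏ m ∈ Finset.range (j + 1), (1 - PowerSeries.X ^ (8 * (m + 1))) ^ 2) =
        PowerSeries.coeff (R := (ZMod 3)) j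
          (PowerSeries.X *
            ∏ m ∈ Finset.range (j + 1),
              ((1 - PowerSeries.X ^ (4 * (m + 1))) ^ 2 *
                (1 - PowerSeries.X ^ (16 * (m + 1))) ^ 2)))
    (n N : ℕ) (hN : 4 * n + 2 ≤ N) :
    MD (4 * n + 2) (PowerSeries.mk a' * Q (Ek 8 N) ^ 2)
      (PowerSeries.X * (Q (Ek 4 N) ^ 2 * Q (Ek 16 N) ^ 2)) := by
  apply MD.of_coeff
  intro j hj
  have hjN : j + 1 ≤ N := by omega
  have h8 := (MD.refl (PowerSeries.mk a')).mul
    (md_trunc (R := ZMod 3) (k := 8) (by omega) hjN)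
  have h416 : MD (j + 1)
      (PowerSeries.X *
        ∏ m ∈ Finset.range (j + 1),
          ((1 - (PowerSeries.X : PowerSeries (ZMod 3)) ^ (4 * (m + 1))) ^ 2 *
            (1 - PowerSeries.X ^ (16 * (m + 1))) ^ 2))
      (PowerSeries.X * (Q (Ek 4 N) ^ 2 * Q (Ek 16 N) ^ 2)) := by
    have hsplit : ∀ M : ℕ,
        (∏ m ∈ Finset.range M,
          ((1 - (PowerSeries.X : PowerSeries (ZMod 3)) ^ (4 * (m + 1))) ^ 2 *
            (1 - PowerSeries.X ^ (16 * (m + 1))) ^ 2)) =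
        (∏ m ∈ Finset.range M, (1 - (PowerSeries.X : PowerSeries (ZMod 3)) ^ (4 * (m + 1))) ^ 2) *
          ∏ m ∈ Finset.range M, (1 - PowerSeries.X ^ (16 * (m + 1))) ^ 2 :=
      fun M => Finset.prod_mul_distrib
    rw [hsplit]
    refine (MD.refl PowerSeries.X).mul (MD.mul ?_ ?_)
    · exact ((md_trunc (R := ZMod 3) (k := 4) (by omega) hjN).symm).trans
        (MD.of_eq (Q_Ek_sq (by omega)).symm)
    · exact ((md_trunc (R := ZMod 3) (k := 16) (by omega) hjN).symm).trans
        (MD.of_eq (Q_Ek_sq (by omega)).symm)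
  have e8 : (Q (Ek 8 N) : PowerSeries (ZMod 3)) ^ 2
      = ∏ m ∈ Finset.range N, (1 - PowerSeries.X ^ (8 * (m + 1))) ^ 2 := Q_Ek_sq (by omega)
  calc PowerSeries.coeff (R := (ZMod 3)) j (PowerSeries.mk a' * Q (Ek 8 N) ^ 2)
      = PowerSeries.coeff (R := (ZMod 3)) j (PowerSeries.mk a' *
          ∏ m ∈ Finset.range (j + 1), (1 - PowerSeries.X ^ (8 * (m + 1))) ^ 2) := by
        rw [e8]
        exact h8.coeff (by omega)
    _ = PowerSeries.coeff (R := (ZMod 3)) j (PowerSeries.X *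
          ∏ m ∈ Finset.range (j + 1),
            ((1 - PowerSeries.X ^ (4 * (m + 1))) ^ 2 *
              (1 - PowerSeries.X ^ (16 * (m + 1))) ^ 2)) := ha' j
    _ = PowerSeries.coeff (R := (ZMod 3)) j
          (PowerSeries.X * (Q (Ek 4 N) ^ 2 * Q (Ek 16 N) ^ 2)) := h416.coeff (by omega)

/-- Step C : stretched pod generating function. -/
theorem stepC (n : ℕ) :
    MD (4 * (n + 1))
      (st (PowerSeries.mk (fun j => ((pod 3 j : ℕ) : ZMod 3))) *
        Q ((Es n).image (fun e => 4 * e)))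
      (∏ i ∈ Os n, (1 + (PowerSeries.X : PowerSeries (ZMod 3)) ^ (4 * i))) := by
  have h := (stepB n).st
  rw [st_mul, st_Q] at h
  have hP : st (∏ i ∈ Os n, (1 + (PowerSeries.X : PowerSeries (ZMod 3)) ^ i))
      = ∏ i ∈ Os n, (1 + (PowerSeries.X : PowerSeries (ZMod 3)) ^ (4 * i)) := by
    rw [st_prod]
    exact Finset.prod_congr rfl fun i _ => st_one_add_X_pow i
  rw [hP] at h
  exact h

/-- Main computation: the coefficient is the pod value mod 3. -/
theorem main_calc (a' : ℕ → ZMod 3)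
    (ha' : ∀ j : ℕ,
      PowerSeries.coeff (R := (ZMod 3)) j
          (PowerSeries.mk a' *
            ∏ m ∈ Finset.range (j + 1), (1 - PowerSeries.X ^ (8 * (m + 1))) ^ 2) =
        PowerSeries.coeff (R := (ZMod 3)) j
          (PowerSeries.X *
            ∏ m ∈ Finset.range (j + 1),
              ((1 - PowerSeries.X ^ (4 * (m + 1))) ^ 2 *
                (1 - PowerSeries.X ^ (16 * (m + 1))) ^ 2)))
    (n : ℕ) : a' (4 * n + 1) = ((pod 3 n : ℕ) : ZMod 3) := by
  set N := 4 * n + 2 with hNdef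
  have hN1 : n + 1 ≤ N := by omega
  have hN2 : 4 * n + 2 ≤ N := by omega
  set U := PowerSeries.mk (fun j => ((pod 3 j : ℕ) : ZMod 3)) with hU
  set QF := (Q ((Es n).image (fun e => 4 * e)) : PowerSeries (ZMod 3)) with hQF
  set P4 := ∏ i ∈ Os n, (1 + (PowerSeries.X : PowerSeries (ZMod 3)) ^ (4 * i)) with hP4
  have hA := stepA a' ha' n N hN2
  have hC : MD (4 * n + 2) (st U * QF) P4 := (stepC n).weaken (by omega)
  -- stretched stepD
  have hD : MD (4 * n + 2) (P4 * Q (Ek 8 N) ^ 2)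
      (QF * Q (Ek 4 N) ^ 2 * Q (Ek 16 N) ^ 2) := by
    have h := (stepD hN1).st
    rw [st_mul, st_pow, st_Q_Ek] at h
    rw [st_mul, st_mul, st_pow, st_pow, st_Q_Ek, st_Q_Ek, st_Q] at h
    have hP : st (∏ i ∈ Os n, (1 + (PowerSeries.X : PowerSeries (ZMod 3)) ^ i)) = P4 := by
      rw [st_prod, hP4]
      exact Finset.prod_congr rfl fun i _ => st_one_add_X_pow i
    rw [hP] at h
    have h' := h.weaken (show 4 * n + 2 ≤ 4 * (n + 1) by omega)
    convert h' using 3 <;> norm_num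
  -- combine
  have hUnit : IsUnit ((Q (Ek 8 N) : PowerSeries (ZMod 3)) ^ 2 * QF) :=
    ((Q_Ek_unit (by omega)).pow 2).mul (Q_isUnit zero_not_mem_Es4)
  have key : MD (4 * n + 2) (PowerSeries.X * st U) (PowerSeries.mk a') := by
    apply MD.cancel hUnit
    have t1 : MD (4 * n + 2) (PowerSeries.X * st U * (Q (Ek 8 N) ^ 2 * QF))
        (PowerSeries.X * P4 * Q (Ek 8 N) ^ 2) := by
      have := (hC.mul (MD.refl (PowerSeries.X * Q (Ek 8 N) ^ 2)))
      exact (MD.of_eq (by ring)).trans (this.trans (MD.of_eq (by ring)))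
    have t2 : MD (4 * n + 2) (PowerSeries.X * P4 * Q (Ek 8 N) ^ 2)
        (PowerSeries.X * (Q (Ek 4 N) ^ 2 * Q (Ek 16 N) ^ 2) * QF) := by
      have := hD.mul (MD.refl PowerSeries.X)
      exact (MD.of_eq (by ring)).trans (this.trans (MD.of_eq (by ring)))
    have t3 : MD (4 * n + 2) (PowerSeries.X * (Q (Ek 4 N) ^ 2 * Q (Ek 16 N) ^ 2) * QF)
        (PowerSeries.mk a' * (Q (Ek 8 N) ^ 2 * QF)) := by
      have := hA.symm.mul (MD.refl QF)
      exact this.trans (MD.of_eq (by ring))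
    exact (t1.trans t2).trans t3
  have hcoeff := key.coeff (show 4 * n + 1 < 4 * n + 2 by omega)
  rw [PowerSeries.coeff_mk] at hcoeff
  rw [← hcoeff]
  have hx : PowerSeries.coeff (R := (ZMod 3)) (4 * n + 1) (PowerSeries.X * st U)
      = PowerSeries.coeff (R := (ZMod 3)) (4 * n) (st U) := PowerSeries.coeff_succ_X_mul (4 * n) _
  rw [hx, coeff_st_mul4, hU, PowerSeries.coeff_mk]

end Final

end PodAux

theorem pod_three_eta_coeff (a : ℕ → ℤ)
    (ha : ∀ n : ℕ,
      PowerSeries.coeff (R := ℤ) n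
          (PowerSeries.mk a *
            ∏ m ∈ Finset.range (n + 1), (1 - PowerSeries.X ^ (8 * (m + 1))) ^ 2) =
        PowerSeries.coeff (R := ℤ) n
          (PowerSeries.X *
            ∏ m ∈ Finset.range (n + 1),
              ((1 - PowerSeries.X ^ (4 * (m + 1))) ^ 2 *
                (1 - PowerSeries.X ^ (16 * (m + 1))) ^ 2)))
    (ha0 : a 0 = 0) (n : ℕ) :
    (pod 3 n : ℤ) ≡ a (4 * n + 1) [ZMOD 3] := by
  classical
  set ρ : ℤ →+* ZMod 3 := Int.castRingHom (ZMod 3) with hρ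
  have hmk : PowerSeries.map ρ (PowerSeries.mk a)
      = PowerSeries.mk (fun m => ((a m : ZMod 3))) := by
    ext m
    rw [PowerSeries.coeff_map, PowerSeries.coeff_mk, PowerSeries.coeff_mk]
    rfl
  have hfac : ∀ k e : ℕ, PowerSeries.map ρ ((1 - PowerSeries.X ^ (k * (e + 1))) ^ 2)
      = (1 - PowerSeries.X ^ (k * (e + 1))) ^ 2 := by
    intro k e
    rw [map_pow, map_sub, map_one, map_pow, PowerSeries.map_X]
  have ha' : ∀ j : ℕ,
      PowerSeries.coeff (R := (ZMod 3)) j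
          (PowerSeries.mk (fun m => ((a m : ZMod 3))) *
            ∏ m ∈ Finset.range (j + 1), (1 - PowerSeries.X ^ (8 * (m + 1))) ^ 2) =
        PowerSeries.coeff (R := (ZMod 3)) j
          (PowerSeries.X *
            ∏ m ∈ Finset.range (j + 1),
              ((1 - PowerSeries.X ^ (4 * (m + 1))) ^ 2 *
                (1 - PowerSeries.X ^ (16 * (m + 1))) ^ 2)) := by
    intro j
    have h2 := congrArg ρ (ha j)
    rw [← PowerSeries.coeff_map, ← PowerSeries.coeff_map] at h2
    have hL : ∀ m ∈ Finset.range (j + 1),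
        PowerSeries.map ρ ((1 - PowerSeries.X ^ (8 * (m + 1))) ^ 2)
          = (1 - PowerSeries.X ^ (8 * (m + 1))) ^ 2 := fun m _ => hfac 8 m
    have hR : ∀ m ∈ Finset.range (j + 1),
        PowerSeries.map ρ
            ((1 - PowerSeries.X ^ (4 * (m + 1))) ^ 2 *
              (1 - PowerSeries.X ^ (16 * (m + 1))) ^ 2)
          = (1 - PowerSeries.X ^ (4 * (m + 1))) ^ 2 *
              (1 - PowerSeries.X ^ (16 * (m + 1))) ^ 2 := by
      intro m _
      rw [map_mul, hfac 4 m, hfac 16 m]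
    have hLS : PowerSeries.map ρ (PowerSeries.mk a *
        ∏ m ∈ Finset.range (j + 1), (1 - PowerSeries.X ^ (8 * (m + 1))) ^ 2)
        = PowerSeries.mk (fun m => ((a m : ZMod 3))) *
          ∏ m ∈ Finset.range (j + 1), (1 - PowerSeries.X ^ (8 * (m + 1))) ^ 2 := by
      rw [map_mul, hmk, map_prod, Finset.prod_congr rfl hL]
    have hRS : PowerSeries.map ρ (PowerSeries.X *
        ∏ m ∈ Finset.range (j + 1),
          ((1 - PowerSeries.X ^ (4 * (m + 1))) ^ 2 *
            (1 - PowerSeries.X ^ (16 * (m + 1))) ^ 2))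
        = PowerSeries.X *
          ∏ m ∈ Finset.range (j + 1),
            ((1 - PowerSeries.X ^ (4 * (m + 1))) ^ 2 *
              (1 - PowerSeries.X ^ (16 * (m + 1))) ^ 2) := by
      rw [map_mul, PowerSeries.map_X, map_prod, Finset.prod_congr rfl hR]
    rw [hLS, hRS] at h2
    exact h2
  have key := PodAux.main_calc (fun m => ((a m : ZMod 3))) ha' n
  refine (ZMod.intCast_eq_intCast_iff _ _ 3).mp ?_
  push_cast
  exact key.symm
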